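/- Let f(x,y) = x^{m₁}·y^{m₂}·∏_{i=1}^n (x − aᵢ·y^{qᵢ}) where m₁, m₂ are non-negative integers, aᵢ ∈ ℂ \ {0}, and q₁,…,qₙ are integers (so that f is a polynomial, assume each qᵢ ≥ 0 or that m₂ is large enough to clear denominators). Let k := |{q₁,…,qₙ}| be the number of distinct exponents qᵢ, and assume k > 0. Then the Newton polytope of f(x,y) has exactly 2k vertices. -/

import Mathlib

open scoped Real Classical

/-- The Newton polytope of a bivariate polynomial: the convex hull (in `ℝ²`) of the set of
exponent vectors of monomials with non-zero coefficient. -/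
noncomputable def newtonPolytope (f : MvPolynomial (Fin 2) ℂ) : Set (ℝ × ℝ) :=
  convexHull ℝ ((fun m : Fin 2 →₀ ℕ => ((m 0 : ℝ), (m 1 : ℝ))) '' (f.support : Set (Fin 2 →₀ ℕ)))

open Finset MvPolynomial

open Finset

section Helpers
variable {n : ℕ}

/-- swap lemma: if `u` and `u'` have the same card, elements of `u \ u'` have value ≤ c and
elements of `u' \ u` have value ≥ c, then the sum over u is ≤ sum over u'. -/
lemma swap_sum_le (q : Fin n → ℕ) (c : ℕ) (u u' : Finset (Fin n))
    (hcard : u.card = u'.card)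
    (h1 : ∀ i ∈ u \ u', q i ≤ c) (h2 : ∀ i ∈ u' \ u, c ≤ q i) :
    ∑ i ∈ u, q i ≤ ∑ i ∈ u', q i := by
  have hc : (u \ u').card = (u' \ u).card := Finset.card_sdiff_comm hcard
  have e1 : ∑ i ∈ u \ (u ∩ u'), q i + ∑ i ∈ u ∩ u', q i = ∑ i ∈ u, q i :=
    Finset.sum_sdiff (Finset.inter_subset_left)
  have e2 : ∑ i ∈ u' \ (u ∩ u'), q i + ∑ i ∈ u ∩ u', q i = ∑ i ∈ u', q i := by
    have := Finset.sum_sdiff (f := q) (Finset.inter_subset_right : u ∩ u' ⊆ u')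
    simpa using this
  rw [Finset.sdiff_inter_self_left] at e1
  rw [Finset.sdiff_inter_self_right] at e2
  have b1 : ∑ i ∈ u \ u', q i ≤ (u \ u').card * c := by
    simpa [mul_comm] using Finset.sum_le_card_nsmul (u \ u') q c h1
  have b2 : (u \ u').card * c ≤ ∑ i ∈ u' \ u, q i := by
    rw [hc]
    simpa [mul_comm] using Finset.card_nsmul_le_sum (u' \ u) q c h2
  omega

lemma swap_sum_lt (q : Fin n → ℕ) (c : ℕ) (u u' : Finset (Fin n))
    (hcard : u.card = u'.card)
    (h1 : ∀ i ∈ u \ u', q i ≤ c) (h2 : ∀ i ∈ u' \ u, c < q i) (hne : u ≠ u') :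
    ∑ i ∈ u, q i < ∑ i ∈ u', q i := by
  have hc : (u \ u').card = (u' \ u).card := Finset.card_sdiff_comm hcard
  have hne' : (u \ u').Nonempty := by
    rw [Finset.sdiff_nonempty]
    intro hsub
    exact hne (Finset.eq_of_subset_of_card_le hsub (le_of_eq hcard.symm))
  have e1 : ∑ i ∈ u \ (u ∩ u'), q i + ∑ i ∈ u ∩ u', q i = ∑ i ∈ u, q i :=
    Finset.sum_sdiff (Finset.inter_subset_left)
  have e2 : ∑ i ∈ u' \ (u ∩ u'), q i + ∑ i ∈ u ∩ u', q i = ∑ i ∈ u', q i := by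
    have := Finset.sum_sdiff (f := q) (Finset.inter_subset_right : u ∩ u' ⊆ u')
    simpa using this
  rw [Finset.sdiff_inter_self_left] at e1
  rw [Finset.sdiff_inter_self_right] at e2
  have b1 : ∑ i ∈ u \ u', q i ≤ (u \ u').card * c := by
    simpa [mul_comm] using Finset.sum_le_card_nsmul (u \ u') q c h1
  have b2 : (u \ u').card * (c + 1) ≤ ∑ i ∈ u' \ u, q i := by
    rw [hc]
    simpa [mul_comm] using Finset.card_nsmul_le_sum (u' \ u) q (c + 1) h2
  have hpos : 0 < (u \ u').card := Finset.card_pos.mpr hne'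
  have hexp : (u \ u').card * (c + 1) = (u \ u').card * c + (u \ u').card := by ring
  omega

end Helpers

section Geom
variable {E : Type*} [AddCommGroup E] [Module ℝ E]

lemma le_of_mem_hull (F : Finset E) (ℓ : E →ₗ[ℝ] ℝ) (M : ℝ)
    (h : ∀ w ∈ F, ℓ w ≤ M) {x : E} (hx : x ∈ convexHull ℝ (F : Set E)) : ℓ x ≤ M := by
  have := convexHull_min (t := {y : E | ℓ y ≤ M}) (fun w hw => h w hw)
    (convex_halfSpace_le (LinearMap.isLinear ℓ) M)
  exact this hx

lemma eq_of_linear_max (F : Finset E) (ℓ : E →ₗ[ℝ] ℝ) (v : E)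
    (h : ∀ w ∈ F, w ≠ v → ℓ w < ℓ v) {x : E} (hx : x ∈ convexHull ℝ (F : Set E))
    (hℓ : ℓ v ≤ ℓ x) : x = v := by
  rw [Finset.convexHull_eq] at hx
  obtain ⟨w, hw0, hw1, hwx⟩ := hx
  rw [Finset.centerMass_eq_of_sum_1 _ _ hw1] at hwx
  simp only [id] at hwx
  have hle : ∀ y ∈ F, w y * ℓ y ≤ w y * ℓ v := by
    intro y hy
    rcases eq_or_ne y v with rfl | hyv
    · exact le_refl _
    · exact mul_le_mul_of_nonneg_left (h y hy hyv).le (hw0 y hy)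
  have hlx : ℓ x = ∑ y ∈ F, w y * ℓ y := by
    rw [← hwx]; rw [map_sum]; simp [map_smul]
  have hsum : ∑ y ∈ F, w y * ℓ v = ℓ v := by
    rw [← Finset.sum_mul, hw1, one_mul]
  -- all weights off v vanish
  have hwz : ∀ y ∈ F, y ≠ v → w y = 0 := by
    intro y hy hyv
    by_contra hwy
    have hwypos : 0 < w y := lt_of_le_of_ne (hw0 y hy) (Ne.symm hwy)
    have : ∑ z ∈ F, w z * ℓ z < ∑ z ∈ F, w z * ℓ v :=
      Finset.sum_lt_sum hle ⟨y, hy, mul_lt_mul_of_pos_left (h y hy hyv) hwypos⟩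
    rw [hsum] at this
    linarith [hlx ▸ hℓ, hlx ▸ this]
  have hvF : v ∈ F := by
    by_contra hvF
    have : ∀ y ∈ F, w y = 0 := fun y hy => hwz y hy (fun h => hvF (h ▸ hy))
    have : (1:ℝ) = 0 := by rw [← hw1, Finset.sum_eq_zero this]
    norm_num at this
  have : ∑ y ∈ F, w y • y = w v • v := by
    apply Finset.sum_eq_single_of_mem v hvF
    intro y hy hyv
    rw [hwz y hy hyv, zero_smul]
  have hwv : w v = 1 := by
    rw [← hw1]
    exact (Finset.sum_eq_single_of_mem v hvF (fun y hy hyv => hwz y hy hyv)).symm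
  rw [← hwx, this, hwv, one_smul]

lemma mem_extremePoints_of_linear_max (F : Finset E) (ℓ : E →ₗ[ℝ] ℝ) (v : E) (hv : v ∈ F)
    (h : ∀ w ∈ F, w ≠ v → ℓ w < ℓ v) :
    v ∈ Set.extremePoints ℝ (convexHull ℝ (F : Set E)) := by
  rw [mem_extremePoints]
  refine ⟨subset_convexHull ℝ _ hv, ?_⟩
  intro x hx y hy hseg
  obtain ⟨α, β, hα, hβ, hαβ, hxy⟩ := hseg
  have hxle : ℓ x ≤ ℓ v := le_of_mem_hull F ℓ (ℓ v) (fun w hw => by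
    rcases eq_or_ne w v with rfl | hwv
    · exact le_refl _
    · exact (h w hw hwv).le) hx
  have hyle : ℓ y ≤ ℓ v := le_of_mem_hull F ℓ (ℓ v) (fun w hw => by
    rcases eq_or_ne w v with rfl | hwv
    · exact le_refl _
    · exact (h w hw hwv).le) hy
  have heq : α * ℓ x + β * ℓ y = ℓ v := by
    rw [← hxy]; simp [map_add, map_smul]
  have hsum1 : α * ℓ v + β * ℓ v = ℓ v := by rw [← add_mul, hαβ, one_mul]
  have hℓx : ℓ v ≤ ℓ x := by
    by_contra hc
    push_neg at hc
    linarith [mul_lt_mul_of_pos_left hc hα, mul_le_mul_of_nonneg_left hyle hβ.le, hsum1]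
  have hℓy : ℓ v ≤ ℓ y := by
    by_contra hc
    push_neg at hc
    linarith [mul_lt_mul_of_pos_left hc hβ, mul_le_mul_of_nonneg_left hxle hα.le, hsum1]
  exact ⟨eq_of_linear_max F ℓ v h hx hℓx, eq_of_linear_max F ℓ v h hy hℓy⟩

lemma mem_segment_line (p d : E) (t T : ℝ) (ht : 0 ≤ t) (htT : t ≤ T) :
    p + t • d ∈ segment ℝ p (p + T • d) := by
  rcases eq_or_lt_of_le (ht.trans htT) with hT | hT
  case inr =>
    refine ⟨1 - t / T, t / T, by rw [sub_nonneg, div_le_one hT]; exact htT, by positivity, by ring, ?_⟩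
    have : (t / T) * T = t := div_mul_cancel₀ t hT.ne'
    rw [smul_add, smul_smul]
    rw [this]
    module
  case inl =>
    have ht0 : t = 0 := le_antisymm (hT ▸ htT) ht
    rw [ht0, ← hT]
    simp [left_mem_segment]
end Geom

noncomputable def Efun (n m₁ m₂ : ℕ) (q : Fin n → ℕ) (u : Finset (Fin n)) : Fin 2 →₀ ℕ :=
  Finsupp.single 0 (m₁ + (n - u.card)) + Finsupp.single 1 (m₂ + ∑ i ∈ u, q i)

lemma Efun_apply0 (n m₁ m₂ : ℕ) (q : Fin n → ℕ) (u : Finset (Fin n)) :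
    Efun n m₁ m₂ q u 0 = m₁ + (n - u.card) := by
  simp [Efun, Finsupp.single_apply]

lemma Efun_apply1 (n m₁ m₂ : ℕ) (q : Fin n → ℕ) (u : Finset (Fin n)) :
    Efun n m₁ m₂ q u 1 = m₂ + ∑ i ∈ u, q i := by
  simp [Efun, Finsupp.single_apply]

lemma Efun_eq_iff (n m₁ m₂ : ℕ) (q : Fin n → ℕ) (u u' : Finset (Fin n))
    (h : Efun n m₁ m₂ q u = Efun n m₁ m₂ q u') :
    u.card = u'.card ∧ ∑ i ∈ u, q i = ∑ i ∈ u', q i := by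
  have h0 := congrArg (fun g : Fin 2 →₀ ℕ => g 0) h
  have h1 := congrArg (fun g : Fin 2 →₀ ℕ => g 1) h
  simp only [Efun_apply0, Efun_apply1] at h0 h1
  have hc : u.card ≤ n := by simpa using Finset.card_le_univ u
  have hc' : u'.card ≤ n := by simpa using Finset.card_le_univ u'
  omega

lemma f_eq (n m₁ m₂ : ℕ) (a : Fin n → ℂ) (q : Fin n → ℕ) :
    (X 0 : MvPolynomial (Fin 2) ℂ) ^ m₁ * X 1 ^ m₂ *
      ∏ i : Fin n, (X 0 - C (a i) * X 1 ^ q i) =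
    ∑ u ∈ Finset.univ.powerset,
      monomial (Efun n m₁ m₂ q u) (∏ i ∈ u, -a i) := by
  have h1 : ∀ i : Fin n, (X 0 - C (a i) * X 1 ^ q i : MvPolynomial (Fin 2) ℂ)
      = (C (-a i) * X 1 ^ q i) + X 0 := by
    intro i; rw [map_neg]; ring
  rw [Finset.prod_congr rfl (fun i _ => h1 i), Finset.prod_add, Finset.mul_sum]
  refine Finset.sum_congr rfl ?_
  intro u hu
  have h2 : ∏ i ∈ u, (C (-a i) * X 1 ^ q i : MvPolynomial (Fin 2) ℂ)
      = C (∏ i ∈ u, -a i) * X 1 ^ (∑ i ∈ u, q i) := by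
    rw [Finset.prod_mul_distrib, Finset.prod_pow_eq_pow_sum, map_prod]
  have h3 : ∏ i ∈ Finset.univ \ u, (X 0 : MvPolynomial (Fin 2) ℂ) = X 0 ^ (n - u.card) := by
    rw [Finset.prod_const, Finset.card_sdiff_of_subset (Finset.subset_univ u)]
    simp
  rw [h2, h3]
  rw [C_apply, X_pow_eq_monomial, X_pow_eq_monomial, X_pow_eq_monomial, X_pow_eq_monomial,
    monomial_mul, monomial_mul, monomial_mul, monomial_mul]
  have hE : ((Finsupp.single (0 : Fin 2) m₁) + Finsupp.single 1 m₂) +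
      ((0 + Finsupp.single 1 (∑ i ∈ u, q i)) + Finsupp.single 0 (n - u.card))
      = Efun n m₁ m₂ q u := by
    apply Finsupp.ext
    intro j
    fin_cases j <;> simp [Efun, Finsupp.single_apply]
  rw [hE]
  congr 1
  ring

lemma support_f (n m₁ m₂ : ℕ) (a : Fin n → ℂ) (q : Fin n → ℕ) :
    ∀ e ∈ ((X 0 : MvPolynomial (Fin 2) ℂ) ^ m₁ * X 1 ^ m₂ *
      ∏ i : Fin n, (X 0 - C (a i) * X 1 ^ q i)).support,
      ∃ u : Finset (Fin n), e = Efun n m₁ m₂ q u := by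
  intro e he
  rw [f_eq] at he
  have hsub := MvPolynomial.support_sum (s := Finset.univ.powerset)
    (f := fun u : Finset (Fin n) => monomial (Efun n m₁ m₂ q u) (∏ i ∈ u, -a i)) he
  rw [Finset.mem_biUnion] at hsub
  obtain ⟨u, _, hmem⟩ := hsub
  have := MvPolynomial.support_monomial_subset hmem
  rw [Finset.mem_singleton] at this
  exact ⟨u, this⟩

lemma coeff_f (n m₁ m₂ : ℕ) (a : Fin n → ℂ) (q : Fin n → ℕ) (u₀ : Finset (Fin n))
    (huniq : ∀ u : Finset (Fin n), Efun n m₁ m₂ q u = Efun n m₁ m₂ q u₀ → u = u₀) :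
    MvPolynomial.coeff (Efun n m₁ m₂ q u₀)
      ((X 0 : MvPolynomial (Fin 2) ℂ) ^ m₁ * X 1 ^ m₂ *
        ∏ i : Fin n, (X 0 - C (a i) * X 1 ^ q i)) = ∏ i ∈ u₀, -a i := by
  rw [f_eq]
  rw [MvPolynomial.coeff_sum]
  rw [Finset.sum_eq_single u₀]
  · rw [MvPolynomial.coeff_monomial, if_pos rfl]
  · intro u hu hne
    rw [MvPolynomial.coeff_monomial, if_neg]
    intro h
    exact hne (huniq u h)
  · intro h
    exact absurd (Finset.mem_powerset.mpr (Finset.subset_univ u₀)) h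

noncomputable def Pp (n m₁ m₂ : ℕ) (q : Fin n → ℕ) (u : Finset (Fin n)) : ℝ × ℝ :=
  ((m₁ : ℝ) + ((n : ℝ) - u.card), (m₂ : ℝ) + ∑ i ∈ u, (q i : ℝ))

def lowS (n : ℕ) (q : Fin n → ℕ) (c : ℕ) : Finset (Fin n) :=
  Finset.univ.filter (fun i => q i ≤ c)

def highS (n : ℕ) (q : Fin n → ℕ) (c : ℕ) : Finset (Fin n) :=
  Finset.univ.filter (fun i => c ≤ q i)

lemma Pp_eq_iff {n m₁ m₂ : ℕ} {q : Fin n → ℕ} {u u' : Finset (Fin n)}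
    (h : Pp n m₁ m₂ q u = Pp n m₁ m₂ q u') :
    u.card = u'.card ∧ ∑ i ∈ u, q i = ∑ i ∈ u', q i := by
  rw [Prod.ext_iff] at h
  obtain ⟨h1, h2⟩ := h
  simp only [Pp] at h1 h2
  constructor
  · have : (u.card : ℝ) = u'.card := by linarith
    exact_mod_cast this
  · have : (∑ i ∈ u, (q i : ℝ)) = ∑ i ∈ u', (q i : ℝ) := by linarith
    exact_mod_cast this

noncomputable def ℓmap (γ β : ℝ) : (ℝ × ℝ) →ₗ[ℝ] ℝ :=
  γ • LinearMap.fst ℝ ℝ ℝ + β • LinearMap.snd ℝ ℝ ℝ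

lemma sum_g {n : ℕ} (q : Fin n → ℕ) (u : Finset (Fin n)) (γ β : ℝ) :
    ∑ i ∈ u, (β * q i - γ) = β * (∑ i ∈ u, (q i : ℝ)) - γ * u.card := by
  rw [Finset.sum_sub_distrib, ← Finset.mul_sum, Finset.sum_const, nsmul_eq_mul]; ring

lemma ell_Pp {n : ℕ} (m₁ m₂ : ℕ) (q : Fin n → ℕ) (u : Finset (Fin n)) (γ β : ℝ) :
    ℓmap γ β (Pp n m₁ m₂ q u)
      = (γ * ((m₁ : ℝ) + n) + β * m₂) + ∑ i ∈ u, (β * q i - γ) := by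
  simp only [ℓmap, Pp, LinearMap.add_apply, LinearMap.smul_apply, LinearMap.fst_apply,
    LinearMap.snd_apply, smul_eq_mul, sum_g]
  ring

lemma sum_g_lt {n : ℕ} (g : Fin n → ℝ) (u u' : Finset (Fin n)) (hgu : ∀ i ∈ u, 0 < g i)
    (hgn : ∀ i ∉ u, g i < 0) (hne : u' ≠ u) : ∑ i ∈ u', g i < ∑ i ∈ u, g i := by
  have e1 : ∑ i ∈ u' \ (u' ∩ u), g i + ∑ i ∈ u' ∩ u, g i = ∑ i ∈ u', g i :=
    Finset.sum_sdiff (Finset.inter_subset_left)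
  rw [Finset.sdiff_inter_self_left] at e1
  have hsub : u' ∩ u ⊆ u := Finset.inter_subset_right
  have hle2 : ∑ i ∈ u' ∩ u, g i ≤ ∑ i ∈ u, g i :=
    Finset.sum_le_sum_of_subset_of_nonneg hsub (fun i hi _ => (hgu i hi).le)
  rcases (u' \ u).eq_empty_or_nonempty with hh | hh
  · -- u' ⊆ u, proper
    have hsub' : u' ⊆ u := by
      intro i hi
      by_contra hiu
      exact (Finset.notMem_empty i) (hh ▸ Finset.mem_sdiff.mpr ⟨hi, hiu⟩)
    have hss : u' ⊂ u := lt_of_le_of_ne hsub' hne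
    obtain ⟨i, hiu, hiu'⟩ := Finset.exists_of_ssubset hss
    have : ∑ i ∈ u', g i < ∑ i ∈ u, g i := by
      apply Finset.sum_lt_sum_of_subset hsub' hiu hiu' (hgu i hiu)
      intro j hj hju'
      exact (hgu j hj).le
    exact this
  · have hneg : ∑ i ∈ u' \ u, g i < 0 := by
      apply Finset.sum_neg (fun i hi => hgn i (Finset.mem_sdiff.mp hi).2) hh
    linarith

section Level
variable {n : ℕ} (q : Fin n → ℕ)

lemma low_unique (c : ℕ) (u : Finset (Fin n)) (hcard : u.card = (lowS n q c).card)
    (hsum : ∑ i ∈ u, q i ≤ ∑ i ∈ lowS n q c, q i) : u = lowS n q c := by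
  by_contra hne
  have := swap_sum_lt q c (lowS n q c) u hcard.symm
    (fun i hi => (Finset.mem_filter.mp (Finset.mem_sdiff.mp hi).1).2)
    (fun i hi => by
      have := (Finset.mem_sdiff.mp hi).2
      simp only [lowS, Finset.mem_filter, Finset.mem_univ, true_and, not_le] at this
      exact this)
    (fun h => hne h.symm)
  omega

lemma high_unique (c : ℕ) (u : Finset (Fin n)) (hcard : u.card = (highS n q c).card)
    (hsum : ∑ i ∈ highS n q c, q i ≤ ∑ i ∈ u, q i) : u = highS n q c := by
  by_contra hne
  rcases (u \ highS n q c).eq_empty_or_nonempty with hh | hh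
  · have hsub : u ⊆ highS n q c := by
      intro i hi
      by_contra hiu
      exact (Finset.notMem_empty i) (hh ▸ Finset.mem_sdiff.mpr ⟨hi, hiu⟩)
    exact hne (Finset.eq_of_subset_of_card_le hsub (le_of_eq hcard.symm))
  · obtain ⟨i0, hi0⟩ := hh
    have hq0 : q i0 < c := by
      have := (Finset.mem_sdiff.mp hi0).2
      simp only [highS, Finset.mem_filter, Finset.mem_univ, true_and, not_le] at this
      exact this
    have hc1 : 1 ≤ c := by omega
    have := swap_sum_lt q (c - 1) u (highS n q c) hcard
      (fun i hi => by
        have := (Finset.mem_sdiff.mp hi).2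
        simp only [highS, Finset.mem_filter, Finset.mem_univ, true_and, not_le] at this
        omega)
      (fun i hi => by
        have := (Finset.mem_filter.mp (Finset.mem_sdiff.mp hi).1).2
        omega)
      hne
    omega

lemma low_max_eq_univ (hD : (Finset.univ.image q).Nonempty) :
    lowS n q ((Finset.univ.image q).max' hD) = Finset.univ := by
  apply Finset.eq_univ_of_forall
  intro i
  simp only [lowS, Finset.mem_filter, Finset.mem_univ, true_and]
  exact Finset.le_max' _ _ (Finset.mem_image_of_mem q (Finset.mem_univ i))

lemma high_min_eq_univ (hD : (Finset.univ.image q).Nonempty) :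
    highS n q ((Finset.univ.image q).min' hD) = Finset.univ := by
  apply Finset.eq_univ_of_forall
  intro i
  simp only [highS, Finset.mem_filter, Finset.mem_univ, true_and]
  exact Finset.min'_le _ _ (Finset.mem_image_of_mem q (Finset.mem_univ i))

/-- the collinearity fact along a "constant value" chain -/
lemma Pp_line (m₁ m₂ : ℕ) (c : ℕ) (um w : Finset (Fin n)) (hsub : um ⊆ w)
    (hval : ∀ i ∈ w, i ∉ um → q i = c) :
    Pp n m₁ m₂ q w = Pp n m₁ m₂ q um + ((w.card : ℝ) - um.card) • ((-1 : ℝ), (c : ℝ)) := by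
  have hcard : um.card ≤ w.card := Finset.card_le_card hsub
  have hsumnat : ∑ i ∈ w, q i = ∑ i ∈ um, q i + (w.card - um.card) * c := by
    have e1 : ∑ i ∈ w \ um, q i + ∑ i ∈ um, q i = ∑ i ∈ w, q i := Finset.sum_sdiff hsub
    have e2 : ∑ i ∈ w \ um, q i = (w \ um).card * c := by
      rw [Finset.sum_congr rfl (fun i hi => by
        obtain ⟨h1, h2⟩ := Finset.mem_sdiff.mp hi
        exact hval i h1 h2)]
      simp [Finset.sum_const, mul_comm]
    have e3 : (w \ um).card = w.card - um.card := Finset.card_sdiff_of_subset hsub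
    rw [e3] at e2
    omega
  have hsum : ∑ i ∈ w, (q i : ℝ) = ∑ i ∈ um, (q i : ℝ) + ((w.card : ℝ) - um.card) * c := by
    have := congrArg (fun x : ℕ => (x : ℝ)) hsumnat
    push_cast at this
    rw [Nat.cast_sub hcard] at this
    push_cast at this
    convert this using 2 <;> push_cast <;> ring
  simp only [Pp, Prod.mk_add_mk, Prod.smul_mk, smul_eq_mul]
  rw [Prod.ext_iff]
  constructor
  · simp only
    ring
  · simp only
    rw [hsum]
    ring
end Level

section Hull
variable {n : ℕ} (q : Fin n → ℕ)

lemma exists_lo (m₁ m₂ : ℕ) (V : Finset (ℝ × ℝ))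
    (hVe : Pp n m₁ m₂ q ∅ ∈ V)
    (hVlow : ∀ c ∈ Finset.univ.image q, Pp n m₁ m₂ q (lowS n q c) ∈ V)
    (s : ℕ) (hs1 : 1 ≤ s) (hsn : s ≤ n) :
    ∃ w : Finset (Fin n), w.card = s ∧
      Pp n m₁ m₂ q w ∈ convexHull ℝ (V : Set (ℝ × ℝ)) ∧
      ∀ u : Finset (Fin n), u.card = s → ∑ i ∈ w, q i ≤ ∑ i ∈ u, q i := by
  have hn : 0 < n := lt_of_lt_of_le hs1 hsn
  have hD : (Finset.univ.image q).Nonempty :=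
    ⟨q ⟨0, hn⟩, Finset.mem_image_of_mem q (Finset.mem_univ _)⟩
  have hmaxD' : (Finset.univ.image q).max' hD
      ∈ (Finset.univ.image q).filter (fun c => s ≤ (lowS n q c).card) := by
    rw [Finset.mem_filter]
    refine ⟨Finset.max'_mem _ _, ?_⟩
    rw [low_max_eq_univ q hD]
    simpa using hsn
  have hD' : ((Finset.univ.image q).filter (fun c => s ≤ (lowS n q c).card)).Nonempty :=
    ⟨_, hmaxD'⟩
  set c := ((Finset.univ.image q).filter (fun c => s ≤ (lowS n q c).card)).min' hD' with hcdef
  have hcD' : c ∈ (Finset.univ.image q).filter (fun c => s ≤ (lowS n q c).card) :=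
    Finset.min'_mem _ _
  have hcD : c ∈ Finset.univ.image q := (Finset.mem_filter.mp hcD').1
  have hsc : s ≤ (lowS n q c).card := (Finset.mem_filter.mp hcD').2
  have hsub : (Finset.univ.filter (fun i => q i < c)) ⊆ lowS n q c := by
    intro i hi
    simp only [lowS, Finset.mem_filter, Finset.mem_univ, true_and] at hi ⊢
    omega
  have hPm : Pp n m₁ m₂ q (Finset.univ.filter (fun i => q i < c)) ∈ V ∧
      (Finset.univ.filter (fun i => q i < c)).card ≤ s := by
    rcases (Finset.univ.filter (fun i => q i < c)).eq_empty_or_nonempty with he | hne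
    · rw [he]; exact ⟨hVe, by simp⟩
    · obtain ⟨i0, hi0⟩ := hne
      have hq0 : q i0 < c := by
        simpa using (Finset.mem_filter.mp hi0).2
      have hmem : q i0 ∈ (Finset.univ.image q).filter (fun x => x < c) := by
        rw [Finset.mem_filter]
        exact ⟨Finset.mem_image_of_mem q (Finset.mem_univ _), hq0⟩
      have hDlt : ((Finset.univ.image q).filter (fun x => x < c)).Nonempty := ⟨_, hmem⟩
      set c' := ((Finset.univ.image q).filter (fun x => x < c)).max' hDlt with hc'def
      have hc'mem : c' ∈ (Finset.univ.image q).filter (fun x => x < c) := Finset.max'_mem _ _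
      have hc'D : c' ∈ Finset.univ.image q := (Finset.mem_filter.mp hc'mem).1
      have hc'c : c' < c := (Finset.mem_filter.mp hc'mem).2
      have hum : (Finset.univ.filter (fun i => q i < c)) = lowS n q c' := by
        ext i
        simp only [lowS, Finset.mem_filter, Finset.mem_univ, true_and]
        constructor
        · intro h
          exact Finset.le_max' _ _ (by
            rw [Finset.mem_filter]
            exact ⟨Finset.mem_image_of_mem q (Finset.mem_univ _), h⟩)
        · intro h; omega
      have hc'notD' : c' ∉ (Finset.univ.image q).filter (fun c => s ≤ (lowS n q c).card) := by
        intro hmem'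
        have := Finset.min'_le _ _ hmem'
        omega
      have hcard : (lowS n q c').card < s := by
        by_contra hcon
        exact hc'notD' (by rw [Finset.mem_filter]; exact ⟨hc'D, by omega⟩)
      rw [hum]
      exact ⟨hVlow c' hc'D, by omega⟩
  obtain ⟨w, hw1, hw2, hw3⟩ := Finset.exists_subsuperset_card_eq hsub hPm.2 hsc
  have hval : ∀ i ∈ lowS n q c, i ∉ (Finset.univ.filter (fun i => q i < c)) → q i = c := by
    intro i hi hni
    simp only [lowS, Finset.mem_filter, Finset.mem_univ, true_and] at hi
    simp only [Finset.mem_filter, Finset.mem_univ, true_and, not_lt] at hni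
    omega
  refine ⟨w, hw3, ?_, ?_⟩
  · have hlw := Pp_line q m₁ m₂ c _ w hw1 (fun i hi hni => hval i (hw2 hi) hni)
    have hlt := Pp_line q m₁ m₂ c _ (lowS n q c) hsub hval
    have hseg := mem_segment_line (Pp n m₁ m₂ q (Finset.univ.filter (fun i => q i < c)))
      ((-1 : ℝ), (c : ℝ))
      ((w.card : ℝ) - (Finset.univ.filter (fun i => q i < c)).card)
      (((lowS n q c).card : ℝ) - (Finset.univ.filter (fun i => q i < c)).card)
      (by
        have h1 := Finset.card_le_card hw1
        have h2 : ((Finset.univ.filter (fun i => q i < c)).card : ℝ) ≤ w.card := by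
          exact_mod_cast h1
        linarith)
      (by
        have h1 := Finset.card_le_card hw2
        have h2 : (w.card : ℝ) ≤ (lowS n q c).card := by exact_mod_cast h1
        linarith)
    rw [← hlw, ← hlt] at hseg
    exact (convex_convexHull ℝ (V : Set (ℝ × ℝ))).segment_subset
      (subset_convexHull ℝ _ hPm.1) (subset_convexHull ℝ _ (hVlow c hcD)) hseg
  · intro u hu
    apply swap_sum_le q c w u (by omega)
    · intro i hi
      have := hw2 (Finset.mem_sdiff.mp hi).1
      simpa [lowS] using this
    · intro i hi
      have hni : i ∉ (Finset.univ.filter (fun i => q i < c)) :=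
        fun h => (Finset.mem_sdiff.mp hi).2 (hw1 h)
      simp only [Finset.mem_filter, Finset.mem_univ, true_and, not_lt] at hni
      exact hni

lemma exists_hi (m₁ m₂ : ℕ) (V : Finset (ℝ × ℝ))
    (hVe : Pp n m₁ m₂ q ∅ ∈ V)
    (hVhigh : ∀ c ∈ Finset.univ.image q, Pp n m₁ m₂ q (highS n q c) ∈ V)
    (s : ℕ) (hs1 : 1 ≤ s) (hsn : s ≤ n) :
    ∃ w : Finset (Fin n), w.card = s ∧
      Pp n m₁ m₂ q w ∈ convexHull ℝ (V : Set (ℝ × ℝ)) ∧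
      ∀ u : Finset (Fin n), u.card = s → ∑ i ∈ u, q i ≤ ∑ i ∈ w, q i := by
  have hn : 0 < n := lt_of_lt_of_le hs1 hsn
  have hD : (Finset.univ.image q).Nonempty :=
    ⟨q ⟨0, hn⟩, Finset.mem_image_of_mem q (Finset.mem_univ _)⟩
  have hminD' : (Finset.univ.image q).min' hD
      ∈ (Finset.univ.image q).filter (fun c => s ≤ (highS n q c).card) := by
    rw [Finset.mem_filter]
    refine ⟨Finset.min'_mem _ _, ?_⟩
    rw [high_min_eq_univ q hD]
    simpa using hsn
  have hD' : ((Finset.univ.image q).filter (fun c => s ≤ (highS n q c).card)).Nonempty :=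
    ⟨_, hminD'⟩
  set c := ((Finset.univ.image q).filter (fun c => s ≤ (highS n q c).card)).max' hD' with hcdef
  have hcD' : c ∈ (Finset.univ.image q).filter (fun c => s ≤ (highS n q c).card) :=
    Finset.max'_mem _ _
  have hcD : c ∈ Finset.univ.image q := (Finset.mem_filter.mp hcD').1
  have hsc : s ≤ (highS n q c).card := (Finset.mem_filter.mp hcD').2
  have hsub : (Finset.univ.filter (fun i => c < q i)) ⊆ highS n q c := by
    intro i hi
    simp only [highS, Finset.mem_filter, Finset.mem_univ, true_and] at hi ⊢
    omega
  have hPm : Pp n m₁ m₂ q (Finset.univ.filter (fun i => c < q i)) ∈ V ∧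
      (Finset.univ.filter (fun i => c < q i)).card ≤ s := by
    rcases (Finset.univ.filter (fun i => c < q i)).eq_empty_or_nonempty with he | hne
    · rw [he]; exact ⟨hVe, by simp⟩
    · obtain ⟨i0, hi0⟩ := hne
      have hq0 : c < q i0 := by
        simpa using (Finset.mem_filter.mp hi0).2
      have hmem : q i0 ∈ (Finset.univ.image q).filter (fun x => c < x) := by
        rw [Finset.mem_filter]
        exact ⟨Finset.mem_image_of_mem q (Finset.mem_univ _), hq0⟩
      have hDgt : ((Finset.univ.image q).filter (fun x => c < x)).Nonempty := ⟨_, hmem⟩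
      set c' := ((Finset.univ.image q).filter (fun x => c < x)).min' hDgt with hc'def
      have hc'mem : c' ∈ (Finset.univ.image q).filter (fun x => c < x) := Finset.min'_mem _ _
      have hc'D : c' ∈ Finset.univ.image q := (Finset.mem_filter.mp hc'mem).1
      have hc'c : c < c' := (Finset.mem_filter.mp hc'mem).2
      have hum : (Finset.univ.filter (fun i => c < q i)) = highS n q c' := by
        ext i
        simp only [highS, Finset.mem_filter, Finset.mem_univ, true_and]
        constructor
        · intro h
          exact Finset.min'_le _ _ (by
            rw [Finset.mem_filter]
            exact ⟨Finset.mem_image_of_mem q (Finset.mem_univ _), h⟩)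
        · intro h; omega
      have hc'notD' : c' ∉ (Finset.univ.image q).filter (fun c => s ≤ (highS n q c).card) := by
        intro hmem'
        have := Finset.le_max' _ _ hmem'
        omega
      have hcard : (highS n q c').card < s := by
        by_contra hcon
        exact hc'notD' (by rw [Finset.mem_filter]; exact ⟨hc'D, by omega⟩)
      rw [hum]
      exact ⟨hVhigh c' hc'D, by omega⟩
  obtain ⟨w, hw1, hw2, hw3⟩ := Finset.exists_subsuperset_card_eq hsub hPm.2 hsc
  have hval : ∀ i ∈ highS n q c, i ∉ (Finset.univ.filter (fun i => c < q i)) → q i = c := by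
    intro i hi hni
    simp only [highS, Finset.mem_filter, Finset.mem_univ, true_and] at hi
    simp only [Finset.mem_filter, Finset.mem_univ, true_and, not_lt] at hni
    omega
  refine ⟨w, hw3, ?_, ?_⟩
  · have hlw := Pp_line q m₁ m₂ c _ w hw1 (fun i hi hni => hval i (hw2 hi) hni)
    have hlt := Pp_line q m₁ m₂ c _ (highS n q c) hsub hval
    have hseg := mem_segment_line (Pp n m₁ m₂ q (Finset.univ.filter (fun i => c < q i)))
      ((-1 : ℝ), (c : ℝ))
      ((w.card : ℝ) - (Finset.univ.filter (fun i => c < q i)).card)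
      (((highS n q c).card : ℝ) - (Finset.univ.filter (fun i => c < q i)).card)
      (by
        have h1 := Finset.card_le_card hw1
        have h2 : ((Finset.univ.filter (fun i => c < q i)).card : ℝ) ≤ w.card := by
          exact_mod_cast h1
        linarith)
      (by
        have h1 := Finset.card_le_card hw2
        have h2 : (w.card : ℝ) ≤ (highS n q c).card := by exact_mod_cast h1
        linarith)
    rw [← hlw, ← hlt] at hseg
    exact (convex_convexHull ℝ (V : Set (ℝ × ℝ))).segment_subset
      (subset_convexHull ℝ _ hPm.1) (subset_convexHull ℝ _ (hVhigh c hcD)) hseg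
  · intro u hu
    apply swap_sum_le q c u w (by omega)
    · intro i hi
      have hni : i ∉ (Finset.univ.filter (fun i => c < q i)) :=
        fun h => (Finset.mem_sdiff.mp hi).2 (hw1 h)
      simp only [Finset.mem_filter, Finset.mem_univ, true_and, not_lt] at hni
      exact hni
    · intro i hi
      have := hw2 (Finset.mem_sdiff.mp hi).1
      simpa [highS] using this

lemma Pp_mem (m₁ m₂ : ℕ) (V : Finset (ℝ × ℝ))
    (hVe : Pp n m₁ m₂ q ∅ ∈ V)
    (hVlow : ∀ c ∈ Finset.univ.image q, Pp n m₁ m₂ q (lowS n q c) ∈ V)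
    (hVhigh : ∀ c ∈ Finset.univ.image q, Pp n m₁ m₂ q (highS n q c) ∈ V)
    (u : Finset (Fin n)) : Pp n m₁ m₂ q u ∈ convexHull ℝ (V : Set (ℝ × ℝ)) := by
  rcases Nat.eq_zero_or_pos u.card with h0 | hpos
  · rw [Finset.card_eq_zero.mp h0]
    exact subset_convexHull ℝ _ hVe
  · have hsn : u.card ≤ n := by simpa using Finset.card_le_univ u
    obtain ⟨w, hwc, hwm, hwmin⟩ := exists_lo q m₁ m₂ V hVe hVlow u.card hpos hsn
    obtain ⟨w', hw'c, hw'm, hw'max⟩ := exists_hi q m₁ m₂ V hVe hVhigh u.card hpos hsn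
    have hlow : ∑ i ∈ w, q i ≤ ∑ i ∈ u, q i := hwmin u rfl
    have hhigh : ∑ i ∈ u, q i ≤ ∑ i ∈ w', q i := hw'max u rfl
    have hxu : Pp n m₁ m₂ q u = Pp n m₁ m₂ q w
        + ((∑ i ∈ u, (q i : ℝ)) - ∑ i ∈ w, (q i : ℝ)) • ((0 : ℝ), (1 : ℝ)) := by
      simp only [Pp, Prod.mk_add_mk, Prod.smul_mk, smul_eq_mul]
      rw [Prod.ext_iff]
      constructor
      · simp only [hwc]
        ring
      · simp only
        ring
    have hxw' : Pp n m₁ m₂ q w' = Pp n m₁ m₂ q w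
        + ((∑ i ∈ w', (q i : ℝ)) - ∑ i ∈ w, (q i : ℝ)) • ((0 : ℝ), (1 : ℝ)) := by
      simp only [Pp, Prod.mk_add_mk, Prod.smul_mk, smul_eq_mul]
      rw [Prod.ext_iff]
      constructor
      · simp only [hw'c, hwc]
        ring
      · simp only
        ring
    have hc1 : (∑ i ∈ w, (q i : ℝ)) ≤ ∑ i ∈ u, (q i : ℝ) := by
      have : ((∑ i ∈ w, q i : ℕ) : ℝ) ≤ ((∑ i ∈ u, q i : ℕ) : ℝ) := by exact_mod_cast hlow
      push_cast at this
      exact this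
    have hc2 : (∑ i ∈ u, (q i : ℝ)) ≤ ∑ i ∈ w', (q i : ℝ) := by
      have : ((∑ i ∈ u, q i : ℕ) : ℝ) ≤ ((∑ i ∈ w', q i : ℕ) : ℝ) := by exact_mod_cast hhigh
      push_cast at this
      exact this
    have hseg := mem_segment_line (Pp n m₁ m₂ q w) ((0 : ℝ), (1 : ℝ))
      ((∑ i ∈ u, (q i : ℝ)) - ∑ i ∈ w, (q i : ℝ))
      ((∑ i ∈ w', (q i : ℝ)) - ∑ i ∈ w, (q i : ℝ))
      (by linarith) (by linarith)
    rw [← hxu, ← hxw'] at hseg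
    exact (convex_convexHull ℝ (V : Set (ℝ × ℝ))).segment_subset hwm hw'm hseg

end Hull

lemma count_V {n : ℕ} (q : Fin n → ℕ) (m₁ m₂ : ℕ) (hD : (Finset.univ.image q).Nonempty) :
    (insert (Pp n m₁ m₂ q ∅)
      (((Finset.univ.image q).image (fun c => Pp n m₁ m₂ q (lowS n q c))) ∪
       ((Finset.univ.image q).image (fun c => Pp n m₁ m₂ q (highS n q c))))).card
    = 2 * (Finset.univ.image q).card := by
  have hlowne : ∀ c ∈ Finset.univ.image q, (lowS n q c).Nonempty := by
    intro c hc
    obtain ⟨i, _, rfl⟩ := Finset.mem_image.mp hc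
    exact ⟨i, by simp [lowS]⟩
  have hhighne : ∀ c ∈ Finset.univ.image q, (highS n q c).Nonempty := by
    intro c hc
    obtain ⟨i, _, rfl⟩ := Finset.mem_image.mp hc
    exact ⟨i, by simp [highS]⟩
  have hlowmono : ∀ c ∈ Finset.univ.image q, ∀ c' ∈ Finset.univ.image q, c < c' →
      (lowS n q c).card < (lowS n q c').card := by
    intro c hc c' hc' hlt
    apply Finset.card_lt_card
    rw [Finset.ssubset_iff_of_subset (by
      intro i hi
      simp only [lowS, Finset.mem_filter, Finset.mem_univ, true_and] at hi ⊢
      omega)]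
    obtain ⟨i, _, rfl⟩ := Finset.mem_image.mp hc'
    exact ⟨i, by simp [lowS], by simp [lowS]; omega⟩
  have hhighmono : ∀ c ∈ Finset.univ.image q, ∀ c' ∈ Finset.univ.image q, c < c' →
      (highS n q c').card < (highS n q c).card := by
    intro c hc c' hc' hlt
    apply Finset.card_lt_card
    rw [Finset.ssubset_iff_of_subset (by
      intro i hi
      simp only [highS, Finset.mem_filter, Finset.mem_univ, true_and] at hi ⊢
      omega)]
    obtain ⟨i, _, rfl⟩ := Finset.mem_image.mp hc
    exact ⟨i, by simp [highS], by simp [highS]; omega⟩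
  have hinjA : Set.InjOn (fun c => Pp n m₁ m₂ q (lowS n q c)) ↑(Finset.univ.image q) := by
    intro c hc c' hc' h
    have := (Pp_eq_iff h).1
    rcases lt_trichotomy c c' with hlt | heq | hlt
    · exact absurd this (by have := hlowmono c hc c' hc' hlt; omega)
    · exact heq
    · exact absurd this (by have := hlowmono c' hc' c hc hlt; omega)
  have hinjB : Set.InjOn (fun c => Pp n m₁ m₂ q (highS n q c)) ↑(Finset.univ.image q) := by
    intro c hc c' hc' h
    have := (Pp_eq_iff h).1
    rcases lt_trichotomy c c' with hlt | heq | hlt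
    · exact absurd this (by have := hhighmono c hc c' hc' hlt; omega)
    · exact heq
    · exact absurd this (by have := hhighmono c' hc' c hc hlt; omega)
  have hcardA := Finset.card_image_of_injOn hinjA
  have hcardB := Finset.card_image_of_injOn hinjB
  have hinter : ((Finset.univ.image q).image (fun c => Pp n m₁ m₂ q (lowS n q c))) ∩
      ((Finset.univ.image q).image (fun c => Pp n m₁ m₂ q (highS n q c)))
      = {Pp n m₁ m₂ q Finset.univ} := by
    ext x
    simp only [Finset.mem_inter, Finset.mem_singleton]
    constructor
    · rintro ⟨hxA, hxB⟩
      obtain ⟨c, hc, rfl⟩ := Finset.mem_image.mp hxA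
      obtain ⟨c', hc', hx2⟩ := Finset.mem_image.mp hxB
      have heqp := (Pp_eq_iff hx2)
      have heq : lowS n q c = highS n q c' := by
        by_contra hne
        have := swap_sum_lt q c (lowS n q c) (highS n q c') heqp.1.symm
          (fun i hi => (Finset.mem_filter.mp (Finset.mem_sdiff.mp hi).1).2)
          (fun i hi => by
            have := (Finset.mem_sdiff.mp hi).2
            simp only [lowS, Finset.mem_filter, Finset.mem_univ, true_and, not_le] at this
            exact this)
          hne
        omega
      have huniv : lowS n q c = Finset.univ := by
        obtain ⟨i0, _, hqi0⟩ := Finset.mem_image.mp hc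
        have hi0low : i0 ∈ lowS n q c := by simp [lowS]; omega
        have hc'le : c' ≤ c := by
          have := hi0low
          rw [heq] at this
          simp only [highS, Finset.mem_filter, Finset.mem_univ, true_and] at this
          omega
        apply Finset.eq_univ_of_forall
        intro i
        by_contra hi
        have h1 : c < q i := by
          simp only [lowS, Finset.mem_filter, Finset.mem_univ, true_and, not_le] at hi
          exact hi
        have h2 : i ∈ highS n q c' := by
          simp only [highS, Finset.mem_filter, Finset.mem_univ, true_and]
          omega
        rw [← heq] at h2
        exact (by simpa [lowS] using h2 : q i ≤ c).not_gt h1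
      rw [huniv]
    · rintro rfl
      constructor
      · apply Finset.mem_image.mpr
        refine ⟨(Finset.univ.image q).max' hD, Finset.max'_mem _ _, ?_⟩
        rw [low_max_eq_univ q hD]
      · apply Finset.mem_image.mpr
        refine ⟨(Finset.univ.image q).min' hD, Finset.min'_mem _ _, ?_⟩
        rw [high_min_eq_univ q hD]
  have hnot : Pp n m₁ m₂ q ∅ ∉
      ((Finset.univ.image q).image (fun c => Pp n m₁ m₂ q (lowS n q c))) ∪
      ((Finset.univ.image q).image (fun c => Pp n m₁ m₂ q (highS n q c))) := by
    intro hmem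
    rcases Finset.mem_union.mp hmem with h | h
    · obtain ⟨c, hc, hx⟩ := Finset.mem_image.mp h
      have h1 := (Pp_eq_iff hx).1
      have h2 := (hlowne c hc).card_pos
      simp only [Finset.card_empty] at h1
      omega
    · obtain ⟨c, hc, hx⟩ := Finset.mem_image.mp h
      have h1 := (Pp_eq_iff hx).1
      have h2 := (hhighne c hc).card_pos
      simp only [Finset.card_empty] at h1
      omega
  rw [Finset.card_insert_of_notMem hnot]
  have hcu := Finset.card_union_add_card_inter
    ((Finset.univ.image q).image (fun c => Pp n m₁ m₂ q (lowS n q c)))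
    ((Finset.univ.image q).image (fun c => Pp n m₁ m₂ q (highS n q c)))
  rw [hinter, Finset.card_singleton] at hcu
  have hDpos : 0 < (Finset.univ.image q).card := Finset.card_pos.mpr hD
  omega

lemma vertex_extreme {n : ℕ} (q : Fin n → ℕ) (m₁ m₂ : ℕ) (SF : Finset (ℝ × ℝ))
    (hSF : ∀ w ∈ SF, ∃ u : Finset (Fin n), w = Pp n m₁ m₂ q u)
    (u₀ : Finset (Fin n)) (hu₀ : Pp n m₁ m₂ q u₀ ∈ SF) (γ β : ℝ)
    (hgu : ∀ i ∈ u₀, 0 < β * q i - γ) (hgn : ∀ i, i ∉ u₀ → β * q i - γ < 0) :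
    Pp n m₁ m₂ q u₀ ∈ Set.extremePoints ℝ (convexHull ℝ (SF : Set (ℝ × ℝ))) := by
  apply mem_extremePoints_of_linear_max SF (ℓmap γ β) _ hu₀
  intro w hw hne
  obtain ⟨u', rfl⟩ := hSF w hw
  have hne' : u' ≠ u₀ := fun h => hne (by rw [h])
  have hlt := sum_g_lt (fun i => β * q i - γ) u₀ u' hgu (fun i hi => hgn i hi) hne'
  rw [ell_Pp, ell_Pp]
  linarith

/-- For `f(x,y) = x^{m₁}·y^{m₂}·∏_{i=1}^n (x − aᵢ·y^{qᵢ})` with all `aᵢ ≠ 0` and `k > 0`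
distinct exponents among `q₁,…,qₙ`, the Newton polytope of `f` has exactly `2k` vertices. -/
theorem stmt18 (n m₁ m₂ : ℕ) (a : Fin n → ℂ) (ha : ∀ i, a i ≠ 0) (q : Fin n → ℕ)
    (k : ℕ) (hk : k = (Finset.univ.image q).card) (hk0 : 0 < k) :
    (Set.extremePoints ℝ (newtonPolytope
        ((MvPolynomial.X 0) ^ m₁ * (MvPolynomial.X 1) ^ m₂ *
          ∏ i : Fin n,
            (MvPolynomial.X 0 - MvPolynomial.C (a i) * (MvPolynomial.X 1) ^ (q i))))).ncard
      = 2 * k := by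
  have hD : (Finset.univ.image q).Nonempty := Finset.card_pos.mp (by omega)
  set f : MvPolynomial (Fin 2) ℂ := (X 0) ^ m₁ * (X 1) ^ m₂ *
      ∏ i : Fin n, (X 0 - C (a i) * (X 1) ^ (q i)) with hfdef
  set SF : Finset (ℝ × ℝ) :=
    f.support.image (fun m : Fin 2 →₀ ℕ => ((m 0 : ℝ), (m 1 : ℝ))) with hSFdef
  have hNP : newtonPolytope f = convexHull ℝ (SF : Set (ℝ × ℝ)) := by
    rw [newtonPolytope, hSFdef, Finset.coe_image]
  have hpi : ∀ u : Finset (Fin n),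
      ((Efun n m₁ m₂ q u 0 : ℝ), (Efun n m₁ m₂ q u 1 : ℝ)) = Pp n m₁ m₂ q u := by
    intro u
    have hc : u.card ≤ n := by simpa using Finset.card_le_univ u
    rw [Efun_apply0, Efun_apply1, Pp, Prod.mk.injEq]
    constructor
    · push_cast [Nat.cast_sub hc]
      ring
    · push_cast
      ring
  have hSFPp : ∀ w ∈ SF, ∃ u : Finset (Fin n), w = Pp n m₁ m₂ q u := by
    intro w hw
    obtain ⟨e, he, rfl⟩ := Finset.mem_image.mp hw
    obtain ⟨u, rfl⟩ := support_f n m₁ m₂ a q e he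
    exact ⟨u, hpi u⟩
  have hmemSF : ∀ u₀ : Finset (Fin n),
      (∀ u : Finset (Fin n), Efun n m₁ m₂ q u = Efun n m₁ m₂ q u₀ → u = u₀) →
      Pp n m₁ m₂ q u₀ ∈ SF := by
    intro u₀ huniq
    have hco := coeff_f n m₁ m₂ a q u₀ huniq
    have hne : (∏ i ∈ u₀, -a i) ≠ 0 :=
      Finset.prod_ne_zero_iff.mpr (fun i _ => neg_ne_zero.mpr (ha i))
    have hsupp : Efun n m₁ m₂ q u₀ ∈ f.support := by
      rw [MvPolynomial.mem_support_iff, hfdef, hco]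
      exact hne
    exact Finset.mem_image.mpr ⟨_, hsupp, hpi u₀⟩
  have hVe : Pp n m₁ m₂ q ∅ ∈ SF := by
    apply hmemSF
    intro u h
    have := (Efun_eq_iff n m₁ m₂ q u ∅ h).1
    rw [Finset.card_empty] at this
    exact Finset.card_eq_zero.mp this
  have hVlow : ∀ c ∈ Finset.univ.image q, Pp n m₁ m₂ q (lowS n q c) ∈ SF := by
    intro c hc
    apply hmemSF
    intro u h
    obtain ⟨h1, h2⟩ := Efun_eq_iff n m₁ m₂ q u (lowS n q c) h
    exact low_unique q c u h1 (le_of_eq h2)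
  have hVhigh : ∀ c ∈ Finset.univ.image q, Pp n m₁ m₂ q (highS n q c) ∈ SF := by
    intro c hc
    apply hmemSF
    intro u h
    obtain ⟨h1, h2⟩ := Efun_eq_iff n m₁ m₂ q u (highS n q c) h
    exact high_unique q c u h1 (le_of_eq h2.symm)
  set V : Finset (ℝ × ℝ) := insert (Pp n m₁ m₂ q ∅)
      (((Finset.univ.image q).image (fun c => Pp n m₁ m₂ q (lowS n q c))) ∪
       ((Finset.univ.image q).image (fun c => Pp n m₁ m₂ q (highS n q c)))) with hVdef
  have hVeV : Pp n m₁ m₂ q ∅ ∈ V := Finset.mem_insert_self _ _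
  have hVlowV : ∀ c ∈ Finset.univ.image q, Pp n m₁ m₂ q (lowS n q c) ∈ V := fun c hc =>
    Finset.mem_insert_of_mem (Finset.mem_union_left _ (Finset.mem_image_of_mem _ hc))
  have hVhighV : ∀ c ∈ Finset.univ.image q, Pp n m₁ m₂ q (highS n q c) ∈ V := fun c hc =>
    Finset.mem_insert_of_mem (Finset.mem_union_right _ (Finset.mem_image_of_mem _ hc))
  have hVSF : ∀ v ∈ V, v ∈ SF := by
    intro v hv
    rcases Finset.mem_insert.mp hv with rfl | hv'
    · exact hVe
    rcases Finset.mem_union.mp hv' with h | h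
    · obtain ⟨c, hc, rfl⟩ := Finset.mem_image.mp h
      exact hVlow c hc
    · obtain ⟨c, hc, rfl⟩ := Finset.mem_image.mp h
      exact hVhigh c hc
  have hVPp : ∀ w ∈ V, ∃ u : Finset (Fin n), w = Pp n m₁ m₂ q u :=
    fun w hw => hSFPp w (hVSF w hw)
  have hullEq : convexHull ℝ (SF : Set (ℝ × ℝ)) = convexHull ℝ (V : Set (ℝ × ℝ)) := by
    apply Set.Subset.antisymm
    · apply convexHull_min
      · intro x hx
        obtain ⟨u, rfl⟩ := hSFPp x hx
        exact Pp_mem q m₁ m₂ V hVeV hVlowV hVhighV u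
      · exact convex_convexHull ℝ _
    · exact convexHull_mono (fun v hv => hVSF v hv)
  have hEP : Set.extremePoints ℝ (newtonPolytope f) = (V : Set (ℝ × ℝ)) := by
    rw [hNP, hullEq]
    apply Set.Subset.antisymm
    · exact extremePoints_convexHull_subset
    · intro v hv
      rcases Finset.mem_insert.mp hv with rfl | hv'
      · apply vertex_extreme q m₁ m₂ V hVPp ∅ hVeV 1 (-1)
        · intro i hi; exact absurd hi (Finset.notMem_empty i)
        · intro i _
          have h0 : (0:ℝ) ≤ (q i : ℝ) := Nat.cast_nonneg _
          linarith
      rcases Finset.mem_union.mp hv' with h | h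
      · obtain ⟨c, hc, rfl⟩ := Finset.mem_image.mp h
        apply vertex_extreme q m₁ m₂ V hVPp (lowS n q c) (hVlowV c hc) (-(c:ℝ) - 1/2) (-1)
        · intro i hi
          have h1 : q i ≤ c := by simpa [lowS] using hi
          have h2 : (q i : ℝ) ≤ c := by exact_mod_cast h1
          linarith
        · intro i hi
          have h1 : c + 1 ≤ q i := by
            simp only [lowS, Finset.mem_filter, Finset.mem_univ, true_and, not_le] at hi
            omega
          have h2 : ((c:ℝ) + 1) ≤ (q i : ℝ) := by exact_mod_cast h1
          linarith
      · obtain ⟨c, hc, rfl⟩ := Finset.mem_image.mp h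
        apply vertex_extreme q m₁ m₂ V hVPp (highS n q c) (hVhighV c hc) ((c:ℝ) - 1/2) 1
        · intro i hi
          have h1 : c ≤ q i := by simpa [highS] using hi
          have h2 : (c : ℝ) ≤ q i := by exact_mod_cast h1
          linarith
        · intro i hi
          have h1 : q i + 1 ≤ c := by
            simp only [highS, Finset.mem_filter, Finset.mem_univ, true_and, not_le] at hi
            omega
          have h2 : ((q i : ℝ) + 1) ≤ (c : ℝ) := by exact_mod_cast h1
          linarith
  rw [hEP, Set.ncard_coe_finset, hVdef, count_V q m₁ m₂ hD, hk]
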